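/- Let c, C₁, P₀ ∈ ℝ and let Z : ℝ → ℝ be three times differentiable with Z(r) ≠ 0 for all r. Define v₁ = c + C₁/Z, P = P₀ + Z − (C₁²/(6Z²))(2 Z Z″ − (Z′)² + 3), and G₁ = (v₁ − c)v₁″ − (v₁′)². Then for all r ∈ ℝ: (v₁(r) − c)·v₁′(r) − Z′(r) + P′(r) − Z(r)·Z′(r)·G₁(r) − (1/3)·Z(r)²·G₁′(r) = 0. -/

import Mathlib

/-- Upper-layer traveling-wave velocity v₁ = c + C₁/Z. -/
noncomputable def v1f (c C₁ : ℝ) (Z : ℝ → ℝ) : ℝ → ℝ := fun r => c + C₁ / Z r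

/-- Pressure integral P = P₀ + Z − (C₁²/(6Z²))(2ZZ″ − (Z′)² + 3). -/
noncomputable def Pf (P₀ C₁ : ℝ) (Z : ℝ → ℝ) : ℝ → ℝ := fun r =>
  P₀ + Z r - (C₁ ^ 2 / (6 * (Z r) ^ 2)) *
    (2 * Z r * deriv (deriv Z) r - (deriv Z r) ^ 2 + 3)

/-- G₁ = (v₁ − c)v₁″ − (v₁′)². -/
noncomputable def G1f (c C₁ : ℝ) (Z : ℝ → ℝ) : ℝ → ℝ := fun r =>
  (v1f c C₁ Z r - c) * deriv (deriv (v1f c C₁ Z)) r - (deriv (v1f c C₁ Z) r) ^ 2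

/-!
Since `v₁ - c = C₁ / Z`, the quantities `v₁′`, `v₁″`, `G₁ = -C₁² (Z Z″ - Z′²) / Z⁴`, `G₁′` and `P′`
are all explicit rational expressions in `Z, Z′, Z″, Z‴` whose denominators are powers of `Z`.
Substituting them, the left-hand side becomes such an expression whose numerator cancels
identically.
-/

section

variable {c C₁ P₀ : ℝ} {Z : ℝ → ℝ}

theorem deriv_v1f (hZ : Differentiable ℝ Z) (hZ0 : ∀ r, Z r ≠ 0) :
    deriv (v1f c C₁ Z) = fun r => -C₁ * deriv Z r / Z r ^ 2 := by
  funext r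
  have h : HasDerivAt (v1f c C₁ Z) (-C₁ * deriv Z r / Z r ^ 2) r :=
    (((hasDerivAt_const r C₁).div (hZ r).hasDerivAt (hZ0 r)).const_add c).congr_deriv (by ring)
  exact h.deriv

theorem deriv_deriv_v1f (hZ : Differentiable ℝ Z) (hZ' : Differentiable ℝ (deriv Z))
    (hZ0 : ∀ r, Z r ≠ 0) :
    deriv (deriv (v1f c C₁ Z)) =
      fun r => -C₁ * (Z r * deriv (deriv Z) r - 2 * deriv Z r ^ 2) / Z r ^ 3 := by
  funext r
  have hz := hZ0 r
  have h : HasDerivAt (fun x => -C₁ * deriv Z x / Z x ^ 2)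
      (-C₁ * (Z r * deriv (deriv Z) r - 2 * deriv Z r ^ 2) / Z r ^ 3) r :=
    (((hZ' r).hasDerivAt.const_mul (-C₁)).div ((hZ r).hasDerivAt.pow 2)
      (pow_ne_zero 2 hz)).congr_deriv (by simp only [Pi.pow_apply]; field_simp; ring)
  rw [deriv_v1f hZ hZ0, h.deriv]

theorem G1f_eq (hZ : Differentiable ℝ Z) (hZ' : Differentiable ℝ (deriv Z))
    (hZ0 : ∀ r, Z r ≠ 0) :
    G1f c C₁ Z = fun r => -C₁ ^ 2 * (Z r * deriv (deriv Z) r - deriv Z r ^ 2) / Z r ^ 4 := by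
  funext r
  have hz := hZ0 r
  rw [G1f, deriv_deriv_v1f hZ hZ' hZ0, deriv_v1f hZ hZ0, v1f]
  field_simp
  ring

theorem deriv_G1f (hZ : Differentiable ℝ Z) (hZ' : Differentiable ℝ (deriv Z))
    (hZ'' : Differentiable ℝ (deriv (deriv Z))) (hZ0 : ∀ r, Z r ≠ 0) (r : ℝ) :
    deriv (G1f c C₁ Z) r =
      -C₁ ^ 2 * (Z r ^ 2 * deriv (deriv (deriv Z)) r - 5 * Z r * deriv Z r * deriv (deriv Z) r
        + 4 * deriv Z r ^ 3) / Z r ^ 5 := by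
  have hz := hZ0 r
  have h : HasDerivAt (fun x => -C₁ ^ 2 * (Z x * deriv (deriv Z) x - deriv Z x ^ 2) / Z x ^ 4)
      (-C₁ ^ 2 * (Z r ^ 2 * deriv (deriv (deriv Z)) r - 5 * Z r * deriv Z r * deriv (deriv Z) r
        + 4 * deriv Z r ^ 3) / Z r ^ 5) r :=
    (((((hZ r).hasDerivAt.mul (hZ'' r).hasDerivAt).sub ((hZ' r).hasDerivAt.pow 2)).const_mul
      (-C₁ ^ 2)).div ((hZ r).hasDerivAt.pow 4) (pow_ne_zero 4 hz)).congr_deriv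
      (by simp only [Pi.pow_apply, Pi.mul_apply, Pi.sub_apply]; field_simp; ring)
  rw [G1f_eq hZ hZ' hZ0, h.deriv]

theorem deriv_Pf {r : ℝ} (hZ : DifferentiableAt ℝ Z r) (hZ' : DifferentiableAt ℝ (deriv Z) r)
    (hZ'' : DifferentiableAt ℝ (deriv (deriv Z)) r) (hz : Z r ≠ 0) :
    deriv (Pf P₀ C₁ Z) r = deriv Z r - C₁ ^ 2 * (Z r ^ 2 * deriv (deriv (deriv Z)) r
      - deriv Z r * (2 * Z r * deriv (deriv Z) r - deriv Z r ^ 2 + 3)) / (3 * Z r ^ 3) := by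
  have hcoeff := (hasDerivAt_const r (C₁ ^ 2)).div ((hZ.hasDerivAt.pow 2).const_mul 6)
    (by simpa using hz)
  have hbracket := (((hZ.hasDerivAt.const_mul 2).mul hZ''.hasDerivAt).sub
    (hZ'.hasDerivAt.pow 2)).add_const 3
  have h : HasDerivAt (Pf P₀ C₁ Z) (deriv Z r - C₁ ^ 2 * (Z r ^ 2 * deriv (deriv (deriv Z)) r
      - deriv Z r * (2 * Z r * deriv (deriv Z) r - deriv Z r ^ 2 + 3)) / (3 * Z r ^ 3)) r :=
    ((hZ.hasDerivAt.const_add P₀).sub (hcoeff.mul hbracket)).congr_deriv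
      (by simp only [Pi.pow_apply, Pi.mul_apply, Pi.sub_apply, Pi.div_apply]; field_simp; ring)
  exact h.deriv

end

theorem stmt5 (c C₁ P₀ : ℝ) (Z : ℝ → ℝ)
    (hZ : Differentiable ℝ Z) (hZ' : Differentiable ℝ (deriv Z))
    (hZ'' : Differentiable ℝ (deriv (deriv Z)))
    (hZ0 : ∀ r : ℝ, Z r ≠ 0) :
    ∀ r : ℝ,
      (v1f c C₁ Z r - c) * deriv (v1f c C₁ Z) r - deriv Z r + deriv (Pf P₀ C₁ Z) r
        - Z r * deriv Z r * G1f c C₁ Z r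
        - (1/3) * (Z r) ^ 2 * deriv (G1f c C₁ Z) r = 0 := by
  intro r
  have hz := hZ0 r
  rw [deriv_G1f hZ hZ' hZ'' hZ0, deriv_Pf (hZ r) (hZ' r) (hZ'' r) hz, G1f_eq hZ hZ' hZ0,
    deriv_v1f hZ hZ0, v1f]
  field_simp
  ring
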